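/- Let A ⊆ B(H) be a nondegenerately acting operator algebra with the complete reduction property, and let A·A′ denote the norm-closed algebra generated by products of elements of A and its commutant A′. Then Lat(A·A′) = Lat A ∩ Lat A′, and every closed A·A′-invariant subspace of H is complemented by an A·A′-invariant subspace. -/

import Mathlib

/-!
`A·A′` is the closed algebra generated by `A` and `A′` (both contain `1`), so its invariant
subspaces are those of `A` and `A′` together.

For the complement of `V ∈ Lat A ∩ Lat A′`, complete reduction on the amplification `ℓ²(H)`
yields a bounded idempotent `P` onto `V` commuting with `A`; more generally every matrix entry
of an `A`-equivariant projection on `ℓ²(H)` lies in `A′`. Now let `D` commute with `A`, map `H`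
into `V` and vanish on `V`. Placing the graph of `n • D` in the coordinates `(2n, 2n+1)` of
`ℓ²(H)` for all `n` at once gives an invariant subspace, and a single projection `Q` onto it has
entries showing `n ‖D x‖ ≤ ‖Q‖ ‖x‖` for every `n`; hence `D = 0`. Applied to `D = P t - t P`
with `t ∈ A′` this puts `P` in `A′`, and `ker P` is the invariant complement.
-/

variable {H : Type*} [NormedAddCommGroup H] [InnerProductSpace ℂ H] [CompleteSpace H]

/-- The norm-closed algebra generated by products `a · t` with `a ∈ A` and `t` in the
commutant `A′` of `A`. -/
noncomputable def productAlgebra (A : Subalgebra ℂ (H →L[ℂ] H)) : Subalgebra ℂ (H →L[ℂ] H) :=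
  (Algebra.adjoin ℂ
    {x : H →L[ℂ] H | ∃ a ∈ A, ∃ t : H →L[ℂ] H, (∀ b ∈ A, Commute t b) ∧ x = a * t}).topologicalClosure

open Module

section Stabilizer

variable {𝕜 E : Type*} [NontriviallyNormedField 𝕜] [NormedAddCommGroup E] [NormedSpace 𝕜 E]

def Submodule.stabilizerAlgebra (V : Submodule 𝕜 E) : Subalgebra 𝕜 (E →L[𝕜] E) where
  carrier := {c | ∀ x ∈ V, c x ∈ V}
  mul_mem' hc hd x hx := hc _ (hd x hx)
  add_mem' hc hd x hx := V.add_mem (hc x hx) (hd x hx)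
  algebraMap_mem' r _ hx := V.smul_mem r hx

@[simp]
theorem Submodule.mem_stabilizerAlgebra {V : Submodule 𝕜 E} {c : E →L[𝕜] E} :
    c ∈ V.stabilizerAlgebra ↔ ∀ x ∈ V, c x ∈ V :=
  Iff.rfl

theorem Submodule.isClosed_stabilizerAlgebra {V : Submodule 𝕜 E} (hV : IsClosed (V : Set E)) :
    IsClosed (V.stabilizerAlgebra : Set (E →L[𝕜] E)) := by
  have hset : (V.stabilizerAlgebra : Set (E →L[𝕜] E)) =
      ⋂ x ∈ V, (fun c : E →L[𝕜] E => c x) ⁻¹' V := by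
    ext; simp
  rw [hset]
  exact isClosed_biInter fun x _ => hV.preimage (ContinuousLinearMap.apply 𝕜 E x).continuous

end Stabilizer

theorem productAlgebra_le_stabilizerAlgebra_iff (A : Subalgebra ℂ (H →L[ℂ] H))
    {V : Submodule ℂ H} (hV : IsClosed (V : Set H)) :
    productAlgebra A ≤ V.stabilizerAlgebra ↔
      A ≤ V.stabilizerAlgebra ∧
        ∀ t : H →L[ℂ] H, (∀ b ∈ A, Commute t b) → t ∈ V.stabilizerAlgebra := by
  have hgen : ∀ a ∈ A, ∀ t : H →L[ℂ] H, (∀ b ∈ A, Commute t b) → a * t ∈ productAlgebra A :=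
    fun a ha t ht => Subalgebra.le_topologicalClosure _ (Algebra.subset_adjoin ⟨a, ha, t, ht, rfl⟩)
  refine ⟨fun h => ⟨fun a ha => h ?_, fun t ht => h ?_⟩, fun ⟨hA, hA'⟩ => ?_⟩
  · simpa using hgen a ha 1 fun b _ => Commute.one_left b
  · simpa using hgen 1 A.one_mem t ht
  · refine Subalgebra.topologicalClosure_minimal ?_ (Submodule.isClosed_stabilizerAlgebra hV)
    refine Algebra.adjoin_le ?_
    rintro _ ⟨a, ha, t, ht, rfl⟩
    exact Subalgebra.mul_mem _ (hA ha) (hA' t ht)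

noncomputable section Amplification

variable {𝕜 E : Type*} [RCLike 𝕜] [NormedAddCommGroup E] [NormedSpace 𝕜 E]

local notation "ℓ²[" E "]" => lp (fun _ : ℕ => E) 2

def lpDiag (a : E →L[𝕜] E) : ℓ²[E] →ₗ[𝕜] ℓ²[E] where
  toFun ξ := ⟨fun i => a (ξ i), ((lp.memℓp ξ).norm.const_mul ‖a‖).mono fun i => a.le_opNorm (ξ i)⟩
  map_add' ξ ζ := lp.ext <| funext fun i => map_add a (ξ i) (ζ i)
  map_smul' c ξ := lp.ext <| funext fun i => map_smul a c (ξ i)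

@[simp]
theorem lpDiag_apply (a : E →L[𝕜] E) (ξ : ℓ²[E]) (i : ℕ) : lpDiag a ξ i = a (ξ i) :=
  rfl

theorem lpDiag_single (a : E →L[𝕜] E) (j : ℕ) (x : E) :
    lpDiag a (lp.single 2 j x) = lp.single 2 j (a x) := by
  ext i
  simp only [lpDiag_apply, lp.coeFn_single, Pi.single_apply]
  split_ifs <;> simp

def IsDiagInvariant (A : Subalgebra 𝕜 (E →L[𝕜] E)) (U : Submodule 𝕜 ℓ²[E]) : Prop :=
  ∀ a ∈ A, ∀ ξ ∈ U, ∀ η : ℓ²[E], (∀ i, η i = a (ξ i)) → η ∈ U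

theorem IsDiagInvariant.mem_invtSubmodule {A : Subalgebra 𝕜 (E →L[𝕜] E)} {U : Submodule 𝕜 ℓ²[E]}
    (hU : IsDiagInvariant A U) {a : E →L[𝕜] E} (ha : a ∈ A) :
    U ∈ End.invtSubmodule (lpDiag a) :=
  (End.mem_invtSubmodule_iff_forall_mem_of_mem _).2 fun ξ hξ => hU a ha ξ hξ _ fun _ => rfl

def HasCompleteReduction (A : Subalgebra 𝕜 (E →L[𝕜] E)) : Prop :=
  ∀ U : Submodule 𝕜 ℓ²[E], IsClosed (U : Set ℓ²[E]) → IsDiagInvariant A U →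
    ∃ W : Submodule 𝕜 ℓ²[E], IsClosed (W : Set ℓ²[E]) ∧ IsDiagInvariant A W ∧ U ⊓ W = ⊥ ∧ U ⊔ W = ⊤

def lpEntry (Q : ℓ²[E] →L[𝕜] ℓ²[E]) (i j : ℕ) : E →L[𝕜] E :=
  lp.evalCLM 𝕜 (fun _ => E) 2 i ∘L Q ∘L lp.singleContinuousLinearMap 𝕜 (fun _ => E) 2 j

@[simp]
theorem lpEntry_apply (Q : ℓ²[E] →L[𝕜] ℓ²[E]) (i j : ℕ) (x : E) :
    lpEntry Q i j x = Q (lp.single 2 j x) i :=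
  rfl

theorem commute_lpEntry {Q : ℓ²[E] →L[𝕜] ℓ²[E]} {a : E →L[𝕜] E}
    (hQa : Commute (Q : ℓ²[E] →ₗ[𝕜] ℓ²[E]) (lpDiag a)) (i j : ℕ) : Commute (lpEntry Q i j) a := by
  ext x
  simpa [lpDiag_single] using congr($hQa (lp.single 2 j x) i)

theorem norm_lpEntry_apply_le (Q : ℓ²[E] →L[𝕜] ℓ²[E]) (i j : ℕ) (x : E) :
    ‖lpEntry Q i j x‖ ≤ ‖Q‖ * ‖x‖ := by
  calc ‖lpEntry Q i j x‖ ≤ ‖Q (lp.single 2 j x)‖ := lp.norm_apply_le_norm two_ne_zero _ i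
    _ ≤ ‖Q‖ * ‖(lp.single 2 j x : ℓ²[E])‖ := Q.le_opNorm _
    _ = ‖Q‖ * ‖x‖ := by rw [lp.norm_single zero_lt_two]

variable {A : Subalgebra 𝕜 (E →L[𝕜] E)}

def lpScaledGraph (D : E →L[𝕜] E) : Submodule 𝕜 ℓ²[E] :=
  ⨅ n : ℕ, LinearMap.ker (lp.evalCLM 𝕜 (fun _ => E) 2 (2 * n + 1) -
    (n : 𝕜) • D ∘L lp.evalCLM 𝕜 (fun _ => E) 2 (2 * n)).toLinearMap

theorem mem_lpScaledGraph {D : E →L[𝕜] E} {ξ : ℓ²[E]} :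
    ξ ∈ lpScaledGraph D ↔ ∀ n : ℕ, ξ (2 * n + 1) = (n : 𝕜) • D (ξ (2 * n)) :=
  Submodule.mem_iInf _ |>.trans <| forall_congr' fun _ => sub_eq_zero

theorem isClosed_lpScaledGraph (D : E →L[𝕜] E) : IsClosed (lpScaledGraph D : Set ℓ²[E]) := by
  rw [lpScaledGraph, Submodule.coe_iInf]
  exact isClosed_iInter fun _ => ContinuousLinearMap.isClosed_ker _

theorem isDiagInvariant_lpScaledGraph {D : E →L[𝕜] E} (hDA : ∀ a ∈ A, Commute D a) :
    IsDiagInvariant A (lpScaledGraph D) := by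
  intro a ha ξ hξ η hη
  rw [mem_lpScaledGraph] at hξ ⊢
  intro n
  have hDa : D (a (ξ (2 * n))) = a (D (ξ (2 * n))) := congr($((hDA a ha).eq) (ξ (2 * n)))
  rw [hη, hη, hξ n, map_smul, hDa]

theorem single_add_smul_single_mem_lpScaledGraph (D : E →L[𝕜] E) (n : ℕ) (x : E) :
    lp.single 2 (2 * n) x + (n : 𝕜) • lp.single 2 (2 * n + 1) (D x) ∈ lpScaledGraph D := by
  rw [mem_lpScaledGraph]
  intro m
  simp only [lp.coeFn_add, lp.coeFn_smul, lp.coeFn_single, Pi.add_apply, Pi.smul_apply,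
    Pi.single_apply]
  split_ifs <;> first | omega | simp_all

variable [CompleteSpace E]

theorem HasCompleteReduction.exists_isProj_commute_lpDiag (hA : HasCompleteReduction A)
    {U : Submodule 𝕜 ℓ²[E]} (hU : IsClosed (U : Set ℓ²[E])) (hUA : IsDiagInvariant A U) :
    ∃ Q : ℓ²[E] →L[𝕜] ℓ²[E], LinearMap.IsProj U (Q : ℓ²[E] →ₗ[𝕜] ℓ²[E]) ∧
      ∀ a ∈ A, Commute (Q : ℓ²[E] →ₗ[𝕜] ℓ²[E]) (lpDiag a) := by
  obtain ⟨W, hW, hWA, hUW, hUW'⟩ := hA U hU hUA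
  have hc : IsCompl U W := ⟨disjoint_iff.2 hUW, codisjoint_iff.2 hUW'⟩
  refine ⟨U.projectionL W (Submodule.IsCompl.isTopCompl_of_isClosed hc hU hW), ?_, fun a ha => ?_⟩
  · exact ⟨fun x => Submodule.projection_apply_mem hc x,
      fun x hx => Submodule.projection_apply_left hc ⟨x, hx⟩⟩
  · rw [Submodule.toLinearMap_projectionL,
      LinearMap.IsIdempotentElem.commute_iff (Submodule.isIdempotentElem_projection hc),
      Submodule.range_projection, Submodule.ker_projection]
    exact ⟨hUA.mem_invtSubmodule ha, hWA.mem_invtSubmodule ha⟩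

theorem HasCompleteReduction.exists_isProj_commute (hA : HasCompleteReduction A)
    {V : Submodule 𝕜 E} (hV : IsClosed (V : Set E)) (hVA : ∀ a ∈ A, ∀ x ∈ V, a x ∈ V) :
    ∃ P : E →L[𝕜] E, LinearMap.IsProj V (P : E →ₗ[𝕜] E) ∧ ∀ a ∈ A, Commute P a := by
  let U : Submodule 𝕜 ℓ²[E] := ⨅ i, V.comap (lp.evalCLM 𝕜 (fun _ => E) 2 i).toLinearMap
  have hmemU (ξ : ℓ²[E]) : ξ ∈ U ↔ ∀ i, ξ i ∈ V := Submodule.mem_iInf _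
  have hU : IsClosed (U : Set ℓ²[E]) := by
    rw [Submodule.coe_iInf]
    exact isClosed_iInter fun i => hV.preimage (lp.evalCLM 𝕜 (fun _ => E) 2 i).continuous
  have hUA : IsDiagInvariant A U := fun a ha ξ hξ η hη => (hmemU η).2 fun i =>
    hη i ▸ hVA a ha _ ((hmemU ξ).1 hξ i)
  obtain ⟨Q, hQ, hQA⟩ := hA.exists_isProj_commute_lpDiag hU hUA
  refine ⟨lpEntry Q 0 0, ⟨fun x => (hmemU _).1 (hQ.map_mem _) 0, fun v hv => ?_⟩,
    fun a ha => commute_lpEntry (hQA a ha) 0 0⟩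
  have hsingle : (lp.single 2 0 v : ℓ²[E]) ∈ U := (hmemU _).2 fun i => by
    simp only [lp.coeFn_single, Pi.single_apply]
    split_ifs
    exacts [hv, V.zero_mem]
  have hfix : Q (lp.single 2 0 v) = lp.single 2 0 v := hQ.map_id _ hsingle
  show lpEntry Q 0 0 v = v
  rw [lpEntry_apply, hfix, lp.single_apply_self]

theorem HasCompleteReduction.eq_zero_of_commute (hA : HasCompleteReduction A) {V : Submodule 𝕜 E}
    (hVA' : ∀ t : E →L[𝕜] E, (∀ b ∈ A, Commute t b) → ∀ x ∈ V, t x ∈ V)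
    {D : E →L[𝕜] E} (hDA : ∀ a ∈ A, Commute D a) (hDV : ∀ x, D x ∈ V) (hVD : ∀ v ∈ V, D v = 0) :
    D = 0 := by
  obtain ⟨Q, hQ, hQA⟩ :=
    hA.exists_isProj_commute_lpDiag (isClosed_lpScaledGraph D) (isDiagInvariant_lpScaledGraph hDA)
  have hbound (n : ℕ) (x : E) : n * ‖D x‖ ≤ ‖Q‖ * ‖x‖ := by
    have hfix : Q (lp.single 2 (2 * n) x + (n : 𝕜) • lp.single 2 (2 * n + 1) (D x)) =
        lp.single 2 (2 * n) x + (n : 𝕜) • lp.single 2 (2 * n + 1) (D x) :=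
      hQ.map_id _ (single_add_smul_single_mem_lpScaledGraph D n x)
    have hcoord :
        lpEntry Q (2 * n) (2 * n) x + (n : 𝕜) • lpEntry Q (2 * n) (2 * n + 1) (D x) = x := by
      have := congr($hfix (2 * n))
      rw [map_add, map_smul] at this
      simp only [lp.coeFn_add, lp.coeFn_smul, Pi.add_apply, Pi.smul_apply, lp.single_apply_self,
        lp.single_apply_ne _ _ _ (show 2 * n ≠ 2 * n + 1 by omega), smul_zero, add_zero] at this
      exact this
    have hcross : D (lpEntry Q (2 * n) (2 * n + 1) (D x)) = 0 :=
      hVD _ (hVA' _ (fun b hb => commute_lpEntry (hQA b hb) _ _) _ (hDV x))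
    have hdiag : D (lpEntry Q (2 * n) (2 * n) x) = D x := by
      have := congr(D $hcoord)
      rwa [map_add, map_smul, hcross, smul_zero, add_zero] at this
    have hgraph : lpEntry Q (2 * n + 1) (2 * n) x = (n : 𝕜) • D x := by
      rw [← hdiag]
      exact mem_lpScaledGraph.1 (hQ.map_mem (lp.single 2 (2 * n) x)) n
    simpa [hgraph, norm_smul] using norm_lpEntry_apply_le Q (2 * n + 1) (2 * n) x
  ext x
  by_contra hx
  obtain ⟨n, hn⟩ := exists_nat_gt (‖Q‖ * ‖x‖ / ‖D x‖)
  have := (div_lt_iff₀ (norm_pos_iff.2 hx)).1 hn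
  linarith [hbound n x]

theorem HasCompleteReduction.exists_isCompl_invariant (hA : HasCompleteReduction A)
    {V : Submodule 𝕜 E} (hV : IsClosed (V : Set E)) (hVA : ∀ a ∈ A, ∀ x ∈ V, a x ∈ V)
    (hVA' : ∀ t : E →L[𝕜] E, (∀ b ∈ A, Commute t b) → ∀ x ∈ V, t x ∈ V) :
    ∃ W : Submodule 𝕜 E, IsClosed (W : Set E) ∧ (∀ a ∈ A, ∀ x ∈ W, a x ∈ W) ∧
      (∀ t : E →L[𝕜] E, (∀ b ∈ A, Commute t b) → ∀ x ∈ W, t x ∈ W) ∧ IsCompl V W := by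
  obtain ⟨P, hP, hPA⟩ := hA.exists_isProj_commute hV hVA
  have hPA' (t : E →L[𝕜] E) (ht : ∀ b ∈ A, Commute t b) : Commute P t := by
    refine sub_eq_zero.1 (hA.eq_zero_of_commute hVA' (fun a ha => ?_) (fun x => ?_) fun v hv => ?_)
    · exact ((hPA a ha).mul_left (ht a ha)).sub_left ((ht a ha).mul_left (hPA a ha))
    · exact V.sub_mem (hP.map_mem _) (hVA' t ht _ (hP.map_mem x))
    · have hPt : P (t v) = t v := hP.map_id _ (hVA' t ht v hv)
      have hPv : P v = v := hP.map_id v hv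
      simp [hPt, hPv]
  have hker {t : E →L[𝕜] E} (hPt : Commute P t) (x : E)
      (hx : x ∈ LinearMap.ker (P : E →ₗ[𝕜] E)) : t x ∈ LinearMap.ker (P : E →ₗ[𝕜] E) := by
    have hPx : P x = 0 := hx
    calc P (t x) = t (P x) := congr($(hPt.eq) x)
      _ = 0 := by rw [hPx, map_zero]
  exact ⟨_, P.isClosed_ker, fun a ha => hker (hPA a ha), fun t ht => hker (hPA' t ht), hP.isCompl⟩

end Amplification

theorem lat_productAlgebra_and_reduction_general
    (A : Subalgebra ℂ (H →L[ℂ] H))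
    (hcrp : ∀ V : Submodule ℂ (lp (fun _ : ℕ => H) 2), IsClosed (V : Set (lp (fun _ : ℕ => H) 2)) →
      (∀ a ∈ A, ∀ ξ ∈ V, ∀ η : lp (fun _ : ℕ => H) 2, (∀ i, η i = a (ξ i)) → η ∈ V) →
      ∃ W : Submodule ℂ (lp (fun _ : ℕ => H) 2), IsClosed (W : Set (lp (fun _ : ℕ => H) 2)) ∧
        (∀ a ∈ A, ∀ ξ ∈ W, ∀ η : lp (fun _ : ℕ => H) 2, (∀ i, η i = a (ξ i)) → η ∈ W) ∧
        V ⊓ W = ⊥ ∧ V ⊔ W = ⊤) :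
    (∀ V : Submodule ℂ H, IsClosed (V : Set H) →
      ((∀ c ∈ productAlgebra A, ∀ x ∈ V, c x ∈ V) ↔
        ((∀ a ∈ A, ∀ x ∈ V, a x ∈ V) ∧
         (∀ t : H →L[ℂ] H, (∀ b ∈ A, Commute t b) → ∀ x ∈ V, t x ∈ V)))) ∧
    (∀ V : Submodule ℂ H, IsClosed (V : Set H) → (∀ c ∈ productAlgebra A, ∀ x ∈ V, c x ∈ V) →
      ∃ W : Submodule ℂ H, IsClosed (W : Set H) ∧ (∀ c ∈ productAlgebra A, ∀ x ∈ W, c x ∈ W) ∧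
        V ⊓ W = ⊥ ∧ V ⊔ W = ⊤) := by
  refine ⟨fun V hV => productAlgebra_le_stabilizerAlgebra_iff A hV, fun V hV hVinv => ?_⟩
  obtain ⟨hVA, hVA'⟩ := (productAlgebra_le_stabilizerAlgebra_iff A hV).1 hVinv
  obtain ⟨W, hW, hWA, hWA', hVW⟩ :=
    HasCompleteReduction.exists_isCompl_invariant hcrp hV hVA hVA'
  exact ⟨W, hW, (productAlgebra_le_stabilizerAlgebra_iff A hW).2 ⟨hWA, hWA'⟩,
    hVW.inf_eq_bot, hVW.sup_eq_top⟩

/-- for a nondegenerately acting operator algebra `A ⊆ B(H)` with the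
complete reduction property, `Lat (A·A′) = Lat A ∩ Lat A′`, and every closed
`A·A′`-invariant subspace is topologically complemented by an `A·A′`-invariant subspace. -/
theorem lat_productAlgebra_and_reduction
    (A : Subalgebra ℂ (H →L[ℂ] H))
    (hnondeg : (Submodule.span ℂ {x : H | ∃ a ∈ A, ∃ ξ : H, a ξ = x}).topologicalClosure = ⊤)
    (hcrp : ∀ V : Submodule ℂ (lp (fun _ : ℕ => H) 2), IsClosed (V : Set (lp (fun _ : ℕ => H) 2)) →
      (∀ a ∈ A, ∀ ξ ∈ V, ∀ η : lp (fun _ : ℕ => H) 2, (∀ i, η i = a (ξ i)) → η ∈ V) →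
      ∃ W : Submodule ℂ (lp (fun _ : ℕ => H) 2), IsClosed (W : Set (lp (fun _ : ℕ => H) 2)) ∧
        (∀ a ∈ A, ∀ ξ ∈ W, ∀ η : lp (fun _ : ℕ => H) 2, (∀ i, η i = a (ξ i)) → η ∈ W) ∧
        V ⊓ W = ⊥ ∧ V ⊔ W = ⊤) :
    (∀ V : Submodule ℂ H, IsClosed (V : Set H) →
      ((∀ c ∈ productAlgebra A, ∀ x ∈ V, c x ∈ V) ↔
        ((∀ a ∈ A, ∀ x ∈ V, a x ∈ V) ∧
         (∀ t : H →L[ℂ] H, (∀ b ∈ A, Commute t b) → ∀ x ∈ V, t x ∈ V)))) ∧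
    (∀ V : Submodule ℂ H, IsClosed (V : Set H) → (∀ c ∈ productAlgebra A, ∀ x ∈ V, c x ∈ V) →
      ∃ W : Submodule ℂ H, IsClosed (W : Set H) ∧ (∀ c ∈ productAlgebra A, ∀ x ∈ W, c x ∈ W) ∧
        V ⊓ W = ⊥ ∧ V ⊔ W = ⊤) :=
  lat_productAlgebra_and_reduction_general A hcrp
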